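/- Let Ã^α be the parabolic type subalgebra of A and (Ã^α)* its image under the anti-automorphism *. Then: (i) Ã^α ∩ (Ã^α)* = A^α; (ii) A = Ã^α · (Ã^α)* = (Ã^α)* · Ã^α. -/

import Mathlib

open MulOpposite

noncomputable section

universe u

section CompFactors

variable (A : Type u) [Ring A]

/-- The `i`-th factor of a series of submodules. -/
abbrev CompSeriesFactor {M : Type u} [AddCommGroup M] [Module A M]
    (s : CompositionSeries (Submodule A M)) (i : Fin s.length) : Type u :=
  ↥(s i.succ) ⧸ Submodule.comap (s i.succ).subtype (s i.castSucc)

open Classical in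
/-- The multiplicity of `N` among the composition factors of `M` (returning `0` if `M`
has no composition series); by the Jordan–Hölder theorem this does not depend on the
choice of composition series. -/
def compMult (M : Type u) [AddCommGroup M] [Module A M]
    (N : Type u) [AddCommGroup N] [Module A N] : ℕ :=
  if h : ∃ s : CompositionSeries (Submodule A M), s.head = ⊥ ∧ s.last = ⊤ then
    (Finset.univ.filter fun i : Fin h.choose.length =>
      Nonempty (CompSeriesFactor A h.choose i ≃ₗ[A] N)).card
  else 0

/-- `N` is (isomorphic to) a composition factor, i.e. a simple subquotient, of `M`. -/
def IsCompFactor (M N : Type u) [AddCommGroup M] [Module A M]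
    [AddCommGroup N] [Module A N] : Prop :=
  ∃ p q : Submodule A M, p ≤ q ∧
    IsSimpleModule A (↥q ⧸ Submodule.comap q.subtype p) ∧
    Nonempty ((↥q ⧸ Submodule.comap q.subtype p) ≃ₗ[A] N)

/-- `M₁` and `M₂` have a common composition factor. -/
def ShareFactor (M₁ M₂ : Type u) [AddCommGroup M₁] [Module A M₁]
    [AddCommGroup M₂] [Module A M₂] : Prop :=
  ∃ (p q : Submodule A M₁) (p' q' : Submodule A M₂), p ≤ q ∧ p' ≤ q' ∧
    IsSimpleModule A (↥q ⧸ Submodule.comap q.subtype p) ∧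
    Nonempty ((↥q ⧸ Submodule.comap q.subtype p) ≃ₗ[A]
      (↥q' ⧸ Submodule.comap q'.subtype p'))

/-- `e` is a primitive central idempotent (a block idempotent) of `A`. -/
def IsPrimCentralIdem (e : A) : Prop :=
  IsIdempotentElem e ∧ e ∈ Set.center A ∧ e ≠ 0 ∧
    ∀ f g : A, IsIdempotentElem f → IsIdempotentElem g → f ∈ Set.center A →
      g ∈ Set.center A → f * g = 0 → e = f + g → f = 0 ∨ g = 0

/-- A module belongs to the block of the central idempotent `e` when `e` acts as
the identity on it. -/
def InBlock (e : A) (M : Type u) [AddCommGroup M] [Module A M] : Prop :=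
  ∀ m : M, e • m = m

/-- `P` is a projective cover of `L`. -/
def IsProjCover (P L : Type u) [AddCommGroup P] [Module A P]
    [AddCommGroup L] [Module A L] : Prop :=
  Module.Projective A P ∧ ∃ f : P →ₗ[A] L, Function.Surjective f ∧
    ∀ N : Submodule A P, N ⊔ LinearMap.ker f = ⊤ → N = ⊤

end CompFactors

/-- The bilinear form on `ι → R` induced by a matrix `φ`. -/
def formSum {R ι : Type u} [CommRing R] [Fintype ι] (φ : ι → ι → R) (x y : ι → R) : R :=
  ∑ s, ∑ t, x s * φ s t * y t

section Cellular

variable (R A : Type u) [CommRing R] [Ring A] [Algebra R A]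
variable (Λp : Type u) [PartialOrder Λp] (T : Λp → Type u) [∀ l, Fintype (T l)]

/-- A cell datum (Graham–Lehrer) for the `R`-algebra `A`: a cellular basis
`c l s t` indexed by pairs of elements of `T l` for `l` in the poset `Λp`, an
anti-automorphism `star` swapping the two indices, and structure constants
`coeff` for right multiplication, acting on the second index modulo higher terms. -/
structure CellDatum where
  c : ∀ l, T l → T l → A
  basis : Module.Basis ((l : Λp) × (T l × T l)) R A
  basis_eq : ∀ l s t, basis ⟨l, (s, t)⟩ = c l s t
  star : A →ₗ[R] A
  star_mul : ∀ a b, star (a * b) = star b * star a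
  star_c : ∀ l s t, star (c l s t) = c l t s
  coeff : ∀ l, T l → A → T l → R
  mul_rule : ∀ (l) (s t : T l) (a : A),
    c l s t * a - ∑ v, coeff l t a v • c l s v ∈
      Submodule.span R {x : A | ∃ l' s' t', l < l' ∧ x = c l' s' t'}

variable {R A Λp T}

namespace CellDatum

variable (D : CellDatum R A Λp T)

/-- The span of the cellular basis elements with index strictly above `l`. -/
def Aup (l : Λp) : Submodule R A :=
  Submodule.span R {x : A | ∃ l' s' t', l < l' ∧ x = D.c l' s' t'}

/-- The span of the cellular basis elements with index in `P`. -/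
def cellSpan (P : Set Λp) : Submodule R A :=
  Submodule.span R {x : A | ∃ l s t, l ∈ P ∧ x = D.c l s t}

/-- The data of right standard (cell) modules: each `T l → R` is a right `A`-module
(i.e. a module over `Aᵐᵒᵖ`), the action is `R`-bilinear, and on the standard basis it is
given by the structure constants of the cell datum. -/
def RightStd [∀ l, DecidableEq (T l)] [∀ l, Module Aᵐᵒᵖ (T l → R)] : Prop :=
  (∀ (l : Λp) (r : R) (a : Aᵐᵒᵖ) (x : T l → R), a • (r • x) = r • (a • x)) ∧
  (∀ (l : Λp) (t : T l) (a : A),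
    (op a) • (Pi.single t 1 : T l → R) = fun v => D.coeff l t a v)

/-- The data of left standard (cell) modules. -/
def LeftStd [∀ l, DecidableEq (T l)] [∀ l, Module A (T l → R)] : Prop :=
  (∀ (l : Λp) (r : R) (a : A) (x : T l → R), a • (r • x) = r • (a • x)) ∧
  (∀ (l : Λp) (t : T l) (a : A),
    a • (Pi.single t 1 : T l → R) = fun v => D.coeff l t (D.star a) v)

/-- `φ` is the matrix of the canonical bilinear form on the standard modules:
`c l u s * c l t v ≡ φ l s t • c l u v` modulo `A^{∨l}`. -/
def FormData (φ : ∀ l, T l → T l → R) : Prop :=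
  ∀ (l : Λp) (s t u v : T l), D.c l u s * D.c l t v - φ l s t • D.c l u v ∈ D.Aup l

section Idem

variable {Λt M X : Type u} [PartialOrder Λt] [PartialOrder X] [Fintype M]

/-- Assumptions (A1)–(A4): `ι : Λp → Λt` realizes the cell poset inside the
bigger poset `Λt`, `κ : M → Λt` realizes the index set of the orthogonal idempotent
decomposition `1 = ∑ e μ`, each `e μ` lies in the span of the `c l s t` with
`ι l ≥ κ μ`, and every column of the cellular basis is fixed by some `e μ`. -/
structure IdemData (ι : Λp → Λt) (κ : M → Λt) (e : M → A) : Prop where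
  order_iff : ∀ l l', ι l ≤ ι l' ↔ l ≤ l'
  kappa_inj : Function.Injective κ
  ne_zero : ∀ μ, e μ ≠ 0
  idem : ∀ μ, e μ * e μ = e μ
  orth : ∀ μ ν, μ ≠ ν → e μ * e ν = 0
  sum_one : ∑ μ, e μ = 1
  mem_span : ∀ μ, e μ ∈ Submodule.span R {x : A | ∃ l s t, κ μ ≤ ι l ∧ x = D.c l s t}
  exists_idem : ∀ (l) (t : T l), ∃ μ, (∀ s, D.c l s t * e μ = D.c l s t) ∧
    (∀ u, e μ * D.c l t u = D.c l t u)

/-- `T(λ,μ)`: the indices `t` whose column (resp. row) of the cellular basis is fixed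
by right (resp. left) multiplication by `e μ`. -/
def Tset (e : M → A) (l : Λp) (μ : M) : Set (T l) :=
  {t | (∀ s, D.c l s t * e μ = D.c l s t) ∧ (∀ u, e μ * D.c l t u = D.c l t u)}

/-- `T⁺_α(λ)`. -/
def Tplus (e : M → A) (ι : Λp → Λt) (κ : M → Λt) (α : Λt → X) (l : Λp) : Set (T l) :=
  {t | ∃ μ, t ∈ D.Tset e l μ ∧ α (ι l) = α (κ μ)}

/-- `T⁻_α(λ)`. -/
def Tminus (e : M → A) (ι : Λp → Λt) (κ : M → Λt) (α : Λt → X) (l : Λp) : Set (T l) :=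
  {t | ∃ μ, t ∈ D.Tset e l μ ∧ α (κ μ) < α (ι l)}

/-- `I(λ,ε)`: `T⁺_α(λ)` for `ε = false` and `T⁻_α(λ)` for `ε = true`. -/
def Iset (e : M → A) (ι : Λp → Λt) (κ : M → Λt) (α : Λt → X) (l : Λp) : Bool → Set (T l)
  | false => D.Tplus e ι κ α l
  | true => D.Tminus e ι κ α l

/-- `J̃(λ,ε)`: `T⁺_α(λ)` for `ε = false` and all of `T(λ)` for `ε = true`. -/
def Jset (e : M → A) (ι : Λp → Λt) (κ : M → Λt) (α : Λt → X) (l : Λp) : Bool → Set (T l)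
  | false => D.Tplus e ι κ α l
  | true => Set.univ

/-- The Levi type subalgebra `A^α` (as a submodule). -/
def levi (e : M → A) (ι : Λp → Λt) (κ : M → Λt) (α : Λt → X) : Submodule R A :=
  Submodule.span R {x : A | ∃ l ε s t, s ∈ D.Iset e ι κ α l ε ∧ t ∈ D.Iset e ι κ α l ε ∧
    x = D.c l s t}

/-- The parabolic type subalgebra `Ã^α` (as a submodule). -/
def parab (e : M → A) (ι : Λp → Λt) (κ : M → Λt) (α : Λt → X) : Submodule R A :=
  Submodule.span R {x : A | ∃ l ε s t, s ∈ D.Iset e ι κ α l ε ∧ t ∈ D.Jset e ι κ α l ε ∧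
    x = D.c l s t}

/-- The span of the elements of the cellular basis of `A^α` of index strictly
above `(l,ε)` in `Ω`. -/
def upperOm (e : M → A) (ι : Λp → Λt) (κ : M → Λt) (α : Λt → X) (p : Λp × Bool) :
    Submodule R A :=
  Submodule.span R {x : A | ∃ (q : Λp × Bool) (s t : T q.1),
    ((p.2 < q.2) ∨ (p.2 = q.2 ∧ p.1 < q.1)) ∧
    s ∈ D.Iset e ι κ α q.1 q.2 ∧ t ∈ D.Iset e ι κ α q.1 q.2 ∧ x = D.c q.1 s t}

/-- The span of the elements of the standard basis of `Ã^α` of index strictly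
above `(l,ε)` in `Ω`. -/
def upperOmParab (e : M → A) (ι : Λp → Λt) (κ : M → Λt) (α : Λt → X) (p : Λp × Bool) :
    Submodule R A :=
  Submodule.span R {x : A | ∃ (q : Λp × Bool) (s t : T q.1),
    ((p.2 < q.2) ∨ (p.2 = q.2 ∧ p.1 < q.1)) ∧
    s ∈ D.Iset e ι κ α q.1 q.2 ∧ t ∈ D.Jset e ι κ α q.1 q.2 ∧ x = D.c q.1 s t}

end Idem

end CellDatum

end Cellular

/-!
Part (i) is bookkeeping on the cellular basis: `A^α`, `Ã^α` and `(Ã^α)*` are spanned by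
subsets of it, `*` permutes it by swapping the two tableaux, and a basis element lies in
both `Ã^α` and `(Ã^α)*` exactly when its two tableaux lie in a common `T^±_α(λ)`.

For part (ii), every `t ∈ T(λ, μ)` satisfies `κ μ ≤ ι λ`, because `c_{λ,t,t} = e_μ c_{λ,t,t}`
lies in the right ideal spanned by the cells above `κ μ`; as `α` is monotone, `t` lies in
`T⁺_α(λ)` or `T⁻_α(λ)`, so every basis element lies in `Ã^α` or in `(Ã^α)*`. Moreover
`1 = ∑ e_μ ∈ A^α`, since `e_μ = e_μ e_μ e_μ` and the sandwich `e_μ c_{λ,s,t} e_μ` vanishes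
unless `s, t ∈ T(λ, μ)`. With `1` in both factors, each product contains `Ã^α + (Ã^α)* = A`.
-/

namespace Submodule

variable {R A : Type*} [CommSemiring R] [Semiring A] [Algebra R A]

lemma span_setOf_mul_eq_mul (P Q : Submodule R A) :
    span R {z : A | ∃ u ∈ P, ∃ v ∈ Q, z = u * v} = P * Q := by
  rw [mul_eq_span_mul_set]
  congr 1
  ext z
  simp [Set.mem_mul, eq_comm]

lemma sup_le_mul_of_one_mem {P Q : Submodule R A} (hP : (1 : A) ∈ P) (hQ : (1 : A) ∈ Q) :
    P ⊔ Q ≤ P * Q := by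
  refine sup_le ?_ ?_
  · calc P = P * 1 := (mul_one P).symm
      _ ≤ P * Q := mul_le_mul_right (one_le.mpr hQ) P
  · calc Q = 1 * Q := (one_mul Q).symm
      _ ≤ P * Q := mul_le_mul_left (one_le.mpr hP) Q

end Submodule

lemma Module.Basis.span_image_inf {ι R M : Type*} [Semiring R] [AddCommMonoid M] [Module R M]
    (b : Module.Basis ι R M) (S₁ S₂ : Set ι) :
    Submodule.span R (b '' S₁) ⊓ Submodule.span R (b '' S₂) =
      Submodule.span R (b '' (S₁ ∩ S₂)) := by
  ext x
  simp only [Submodule.mem_inf, Module.Basis.mem_span_image, Set.subset_inter_iff]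

namespace CellDatum

open Submodule

def swapIdx {Λp : Type u} {T : Λp → Type u} (i : (l : Λp) × (T l × T l)) :
    (l : Λp) × (T l × T l) :=
  ⟨i.1, i.2.swap⟩

lemma swapIdx_involutive {Λp : Type u} {T : Λp → Type u} :
    Function.Involutive (swapIdx (T := T)) :=
  fun _ => rfl

variable {R A Λp : Type u} [CommRing R] [Ring A] [Algebra R A] [PartialOrder Λp]
  {T : Λp → Type u} [∀ l, Fintype (T l)] (D : CellDatum R A Λp T)

lemma star_basis (i : (l : Λp) × (T l × T l)) : D.star (D.basis i) = D.basis (swapIdx i) := by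
  obtain ⟨l, s, t⟩ := i
  rw [swapIdx, D.basis_eq, D.basis_eq, D.star_c]
  rfl

lemma map_star_span_basis (S : Set ((l : Λp) × (T l × T l))) :
    (span R (D.basis '' S)).map D.star = span R (D.basis '' (swapIdx ⁻¹' S)) := by
  rw [map_span, Set.image_image, ← swapIdx_involutive.image_eq_preimage_symm, Set.image_image]
  simp only [star_basis]

lemma image_basis (S : Set ((l : Λp) × (T l × T l))) :
    D.basis '' S = {x | ∃ l s t, ⟨l, (s, t)⟩ ∈ S ∧ x = D.c l s t} := by
  ext x
  constructor
  · rintro ⟨⟨l, s, t⟩, hi, rfl⟩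
    exact ⟨l, s, t, hi, D.basis_eq l s t⟩
  · rintro ⟨l, s, t, hi, rfl⟩
    exact ⟨⟨l, s, t⟩, hi, D.basis_eq l s t⟩

lemma cellSpan_eq_span_basis (P : Set Λp) :
    D.cellSpan P = span R (D.basis '' {i | i.1 ∈ P}) := by
  rw [image_basis]
  rfl

lemma mul_mem_cellSpan {P : Set Λp} (hP : IsUpperSet P) {x : A} (hx : x ∈ D.cellSpan P)
    (a : A) : x * a ∈ D.cellSpan P := by
  induction hx using Submodule.span_induction with
  | mem x hx =>
    obtain ⟨l, s, t, hl, rfl⟩ := hx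
    have hup : D.Aup l ≤ D.cellSpan P := span_le.mpr <| by
      rintro _ ⟨l', s', t', hll', rfl⟩
      exact subset_span ⟨l', s', t', hP hll'.le hl, rfl⟩
    rw [← sub_add_cancel (D.c l s t * a) (∑ v, D.coeff l t a v • D.c l s v)]
    exact add_mem (hup (D.mul_rule l s t a))
      (sum_mem fun v _ => smul_mem _ _ (subset_span ⟨l, s, v, hl, rfl⟩))
  | zero => simp
  | add x y _ _ hx hy => simpa [add_mul] using add_mem hx hy
  | smul r x _ hx => simpa [smul_mul_assoc] using smul_mem _ r hx

lemma c_mem_cellSpan_iff [Nontrivial R] {P : Set Λp} {l : Λp} (s t : T l) :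
    D.c l s t ∈ D.cellSpan P ↔ l ∈ P := by
  rw [cellSpan_eq_span_basis, ← D.basis_eq, D.basis.self_mem_span_image]
  rfl

section Parabolic

variable {Λt M X : Type u} [PartialOrder X] (e : M → A) (ι : Λp → Λt) (κ : M → Λt) (α : Λt → X)

def leviIdx : Set ((l : Λp) × (T l × T l)) :=
  {i | ∃ ε, i.2.1 ∈ D.Iset e ι κ α i.1 ε ∧ i.2.2 ∈ D.Iset e ι κ α i.1 ε}

def parabIdx : Set ((l : Λp) × (T l × T l)) :=
  {i | ∃ ε, i.2.1 ∈ D.Iset e ι κ α i.1 ε ∧ i.2.2 ∈ D.Jset e ι κ α i.1 ε}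

lemma levi_eq_span_basis : D.levi e ι κ α = span R (D.basis '' D.leviIdx e ι κ α) := by
  rw [image_basis, levi]
  congr 1
  ext x
  exact ⟨fun ⟨l, ε, s, t, hs, ht, hx⟩ => ⟨l, s, t, ⟨ε, hs, ht⟩, hx⟩,
    fun ⟨l, s, t, ⟨ε, hs, ht⟩, hx⟩ => ⟨l, ε, s, t, hs, ht, hx⟩⟩

lemma parab_eq_span_basis : D.parab e ι κ α = span R (D.basis '' D.parabIdx e ι κ α) := by
  rw [image_basis, parab]
  congr 1
  ext x
  exact ⟨fun ⟨l, ε, s, t, hs, ht, hx⟩ => ⟨l, s, t, ⟨ε, hs, ht⟩, hx⟩,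
    fun ⟨l, s, t, ⟨ε, hs, ht⟩, hx⟩ => ⟨l, ε, s, t, hs, ht, hx⟩⟩

lemma parabIdx_inter_preimage_swapIdx :
    D.parabIdx e ι κ α ∩ swapIdx ⁻¹' D.parabIdx e ι κ α = D.leviIdx e ι κ α := by
  ext ⟨l, s, t⟩
  constructor
  · rintro ⟨⟨ε₁, hs, ht⟩, ⟨ε₂, ht', hs'⟩⟩
    cases ε₁ with
    | false => exact ⟨false, hs, ht⟩
    | true =>
      cases ε₂ with
      | false => exact ⟨false, hs', ht'⟩
      | true => exact ⟨true, hs, ht'⟩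
  · rintro ⟨ε, hs, ht⟩
    cases ε with
    | false => exact ⟨⟨false, hs, ht⟩, ⟨false, ht, hs⟩⟩
    | true => exact ⟨⟨true, hs, trivial⟩, ⟨true, ht, trivial⟩⟩

theorem parab_inf_map_star_parab :
    D.parab e ι κ α ⊓ (D.parab e ι κ α).map D.star = D.levi e ι κ α := by
  rw [parab_eq_span_basis, map_star_span_basis, Module.Basis.span_image_inf,
    parabIdx_inter_preimage_swapIdx, levi_eq_span_basis]

lemma parabIdx_union_preimage_swapIdx
    (h : ∀ l (t : T l), t ∈ D.Tplus e ι κ α l ∨ t ∈ D.Tminus e ι κ α l) :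
    D.parabIdx e ι κ α ∪ swapIdx ⁻¹' D.parabIdx e ι κ α = Set.univ := by
  refine Set.eq_univ_of_forall fun ⟨l, s, t⟩ => ?_
  rcases h l s with hs | hs
  · rcases h l t with ht | ht
    · exact Or.inl ⟨false, hs, ht⟩
    · exact Or.inr ⟨true, ht, trivial⟩
  · exact Or.inl ⟨true, hs, trivial⟩

lemma c_mem_levi [Preorder Λt] (hα : Monotone α) {l : Λp} {s t : T l} {μ : M} (hl : κ μ ≤ ι l)
    (hs : s ∈ D.Tset e l μ) (ht : t ∈ D.Tset e l μ) : D.c l s t ∈ D.levi e ι κ α := by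
  refine subset_span ⟨l, ?_⟩
  rcases (hα hl).lt_or_eq with hlt | heq
  · exact ⟨true, s, t, ⟨μ, hs, hlt⟩, ⟨μ, ht, hlt⟩, rfl⟩
  · exact ⟨false, s, t, ⟨μ, hs, heq.symm⟩, ⟨μ, ht, heq.symm⟩, rfl⟩

end Parabolic

namespace IdemData

variable {Λt M X : Type u} [PartialOrder Λt] [PartialOrder X] [Fintype M]
  {D} {ι : Λp → Λt} {κ : M → Λt} {e : M → A} {α : Λt → X} (hA : D.IdemData ι κ e)
include hA

lemma e_mul_c_of_ne {l : Λp} {s : T l} {μ ν : M} (hs : s ∈ D.Tset e l ν) (h : ν ≠ μ)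
    (t : T l) : e μ * D.c l s t = 0 := by
  rw [← hs.2 t, ← mul_assoc, hA.orth μ ν h.symm, zero_mul]

lemma c_mul_e_of_ne {l : Λp} {t : T l} {μ ν : M} (ht : t ∈ D.Tset e l ν) (h : ν ≠ μ)
    (s : T l) : D.c l s t * e μ = 0 := by
  rw [← ht.1 s, mul_assoc, hA.orth ν μ h, mul_zero]

lemma e_mem_levi (hα : Monotone α) (μ : M) : e μ ∈ D.levi e ι κ α := by
  have hsandwich : ∀ x ∈ D.cellSpan {l | κ μ ≤ ι l}, e μ * x * e μ ∈ D.levi e ι κ α := by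
    intro x hx
    induction hx using Submodule.span_induction with
    | mem x hx =>
      obtain ⟨l, s, t, hl, rfl⟩ := hx
      obtain ⟨νs, hνs⟩ := hA.exists_idem l s
      obtain ⟨νt, hνt⟩ := hA.exists_idem l t
      by_cases hs : νs = μ
      · by_cases ht : νt = μ
        · subst hs ht
          rw [hνs.2 t, hνt.1 s]
          exact D.c_mem_levi e ι κ α hα hl hνs hνt
        · rw [mul_assoc, hA.c_mul_e_of_ne hνt ht, mul_zero]
          exact zero_mem _
      · rw [hA.e_mul_c_of_ne hνs hs, zero_mul]
        exact zero_mem _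
    | zero => simp
    | add x y _ _ hx hy => simpa [mul_add, add_mul] using add_mem hx hy
    | smul r x _ hx => simpa using smul_mem _ r hx
  simpa only [hA.idem] using hsandwich (e μ) (hA.mem_span μ)

lemma one_mem_levi (hα : Monotone α) : (1 : A) ∈ D.levi e ι κ α := by
  rw [← hA.sum_one]
  exact sum_mem fun μ _ => hA.e_mem_levi hα μ

lemma kappa_le_iota [Nontrivial R] {l : Λp} {t : T l} {μ : M} (ht : t ∈ D.Tset e l μ) :
    κ μ ≤ ι l := by
  have hup : IsUpperSet {l | κ μ ≤ ι l} := fun l l' hll' hl =>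
    hl.trans ((hA.order_iff l l').mpr hll')
  refine (D.c_mem_cellSpan_iff (P := {l | κ μ ≤ ι l}) t t).mp ?_
  rw [← ht.2 t]
  exact D.mul_mem_cellSpan hup (hA.mem_span μ) _

lemma mem_Tplus_or_mem_Tminus [Nontrivial R] (hα : Monotone α) (l : Λp) (t : T l) :
    t ∈ D.Tplus e ι κ α l ∨ t ∈ D.Tminus e ι κ α l := by
  obtain ⟨μ, ht⟩ := hA.exists_idem l t
  rcases (hα (hA.kappa_le_iota ht)).lt_or_eq with hlt | heq
  · exact Or.inr ⟨μ, ht, hlt⟩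
  · exact Or.inl ⟨μ, ht, heq.symm⟩

theorem parab_sup_map_star_parab (hα : Monotone α) :
    D.parab e ι κ α ⊔ (D.parab e ι κ α).map D.star = ⊤ := by
  rcases subsingleton_or_nontrivial R with _ | _
  · have := Module.subsingleton R A
    exact Subsingleton.elim _ _
  rw [parab_eq_span_basis, map_star_span_basis, ← span_union, ← Set.image_union,
    D.parabIdx_union_preimage_swapIdx e ι κ α (hA.mem_Tplus_or_mem_Tminus hα),
    Set.image_univ, D.basis.span_eq]

end IdemData

end CellDatum

theorem stmt_14_general
    {R A : Type u} [CommRing R] [Ring A] [Algebra R A]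
    {Λp : Type u} [PartialOrder Λp]
    {T : Λp → Type u} [∀ l, Fintype (T l)]
    {Λt M X : Type u} [PartialOrder Λt] [PartialOrder X] [Fintype M]
    (D : CellDatum R A Λp T)
    (ι : Λp → Λt) (κ : M → Λt) (e : M → A)
    (hA : D.IdemData ι κ e)
    (α : Λt → X) (hα : Monotone α) :
    D.parab e ι κ α ⊓ Submodule.map D.star (D.parab e ι κ α) = D.levi e ι κ α ∧
    Submodule.span R {z : A | ∃ u ∈ D.parab e ι κ α,
      ∃ v ∈ Submodule.map D.star (D.parab e ι κ α), z = u * v} = ⊤ ∧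
    Submodule.span R {z : A | ∃ u ∈ Submodule.map D.star (D.parab e ι κ α),
      ∃ v ∈ D.parab e ι κ α, z = u * v} = ⊤ := by
  have hinf := D.parab_inf_map_star_parab e ι κ α
  have hsup := hA.parab_sup_map_star_parab hα
  have hone : (1 : A) ∈ D.parab e ι κ α ⊓ (D.parab e ι κ α).map D.star :=
    hinf ▸ hA.one_mem_levi hα
  refine ⟨hinf, ?_, ?_⟩
  · rw [Submodule.span_setOf_mul_eq_mul, eq_top_iff, ← hsup]
    exact Submodule.sup_le_mul_of_one_mem hone.1 hone.2
  · rw [Submodule.span_setOf_mul_eq_mul, eq_top_iff, ← hsup, sup_comm]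
    exact Submodule.sup_le_mul_of_one_mem hone.2 hone.1

/-- (i) `Ã^α ∩ (Ã^α)* = A^α`; (ii) `A = Ã^α · (Ã^α)* = (Ã^α)* · Ã^α`. -/
theorem stmt_14
    {R A : Type u} [CommRing R] [Ring A] [Algebra R A]
    {Λp : Type u} [PartialOrder Λp] [Fintype Λp]
    {T : Λp → Type u} [∀ l, Fintype (T l)]
    {Λt M X : Type u} [PartialOrder Λt] [PartialOrder X] [Fintype M]
    (D : CellDatum R A Λp T)
    (ι : Λp → Λt) (κ : M → Λt) (e : M → A)
    (hA : D.IdemData ι κ e)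
    (α : Λt → X) (hα : Monotone α) :
    D.parab e ι κ α ⊓ Submodule.map D.star (D.parab e ι κ α) = D.levi e ι κ α ∧
    Submodule.span R {z : A | ∃ u ∈ D.parab e ι κ α,
      ∃ v ∈ Submodule.map D.star (D.parab e ι κ α), z = u * v} = ⊤ ∧
    Submodule.span R {z : A | ∃ u ∈ Submodule.map D.star (D.parab e ι κ α),
      ∃ v ∈ D.parab e ι κ α, z = u * v} = ⊤ :=
  stmt_14_general D ι κ e hA α hα
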